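/- Let N be a finite nonempty multiset of real numbers (agent positions) partitioned into a finite nonempty collection G of nonempty groups, and A a finite nonempty set of real numbers (alternative positions); let L = min A and U = max A. Let top : N → {L,U} satisfy |p − y| ≤ |p − top(p)| for every agent p and y ∈ {L,U} (top(p) is the farther of the two extreme alternatives from p). Let r : G → {L,U} and suppose that for every group g there is a bijection μ_g : g → g such that |p − top(μ_g(p))| ≤ |p − r(g)| for every p ∈ g. Suppose w lies in the image of r and maximizes the total size of the groups it represents among the representatives. Then for every alternative o ∈ A, Σ_{p∈N} |p − o| ≤ 7 · Σ_{p∈N} |p − w|. -/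
import Mathlib


/-- On the line, the Max-Weight-of-Domination mechanism run on the two
extreme alternatives has distortion at most 7. -/
theorem maxWeightOfDomination_line_distortion_seven
    {ι κ : Type*} [DecidableEq ι] [DecidableEq κ]
    (N : Finset ι) (hN : N.Nonempty) (loc : ι → ℝ)
    (G : Finset κ) (hG : G.Nonempty) (grp : κ → Finset ι)
    (hgne : ∀ g ∈ G, (grp g).Nonempty)
    (hdisj : ∀ g ∈ G, ∀ g' ∈ G, g ≠ g' → Disjoint (grp g) (grp g'))
    (hcover : N = G.biUnion grp)
    (A : Finset ℝ) (hA : A.Nonempty)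
    (L U : ℝ) (hL : L = A.min' hA) (hU : U = A.max' hA)
    (top : ι → ℝ) (htopLU : ∀ i ∈ N, top i = L ∨ top i = U)
    (htop : ∀ i ∈ N, ∀ y : ℝ, y = L ∨ y = U → |loc i - y| ≤ |loc i - top i|)
    (r : κ → ℝ) (hrLU : ∀ g ∈ G, r g = L ∨ r g = U)
    (μ : κ → ι → ι) (hμ : ∀ g ∈ G, Set.BijOn (μ g) ↑(grp g) ↑(grp g))
    (hdom : ∀ g ∈ G, ∀ i ∈ grp g, |loc i - top (μ g i)| ≤ |loc i - r g|)
    (w : ℝ) (hw : ∃ g ∈ G, r g = w)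
    (hwmax : ∀ x : ℝ, (∃ g ∈ G, r g = x) →
      ∑ g ∈ G.filter (fun g => r g = x), (grp g).card ≤
        ∑ g ∈ G.filter (fun g => r g = w), (grp g).card)
    (o : ℝ) (ho : o ∈ A) :
    ∑ i ∈ N, |loc i - o| ≤ 7 * ∑ i ∈ N, |loc i - w| := by
  have hLU : L ≤ U := by
    rw [hL, hU]; exact A.min'_le _ (A.max'_mem hA)
  have hLo : L ≤ o := hL ▸ A.min'_le o ho
  have hoU : o ≤ U := hU ▸ A.le_max' o ho
  have hwLU : w = L ∨ w = U := by
    obtain ⟨g0, hg0, hr0⟩ := hw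
    exact hr0 ▸ hrLU g0 hg0
  have hmemN : ∀ g ∈ G, ∀ i ∈ grp g, i ∈ N := by
    intro g hg i hi
    rw [hcover]
    exact Finset.mem_biUnion.2 ⟨g, hg, hi⟩
  -- Step 1: |loc i - o| ≤ |loc i - top i| for all agents
  have step1 : ∀ i ∈ N, |loc i - o| ≤ |loc i - top i| := by
    intro i hi
    have hLt := htop i hi L (Or.inl rfl)
    have hUt := htop i hi U (Or.inr rfl)
    have h1 : U - loc i ≤ |loc i - U| := by
      rw [abs_sub_comm]; exact le_abs_self _
    have h2 : loc i - L ≤ |loc i - L| := le_abs_self _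
    rcases le_total (loc i) o with h | h
    · rw [abs_sub_comm, abs_of_nonneg (by linarith)]; linarith
    · rw [abs_of_nonneg (by linarith)]; linarith
  -- diameter bound: |loc j - top j| + |loc j - w| ≥ U - L
  have hdiam : ∀ j ∈ N, U - L ≤ |loc j - top j| + |loc j - w| := by
    intro j hj
    have hLt := htop j hj L (Or.inl rfl)
    have hUt := htop j hj U (Or.inr rfl)
    have h1 : U - loc j ≤ |loc j - U| := by
      rw [abs_sub_comm]; exact le_abs_self _
    have h2 : loc j - L ≤ |loc j - L| := le_abs_self _
    rcases hwLU with hwl | hwu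
    · rw [hwl]; linarith
    · rw [hwu]; linarith
  -- |w - top i| ≤ U - L
  have hwt : ∀ i ∈ N, |w - top i| ≤ U - L := by
    intro i hi
    rcases abs_cases (w - top i) with ⟨h, _⟩ | ⟨h, _⟩ <;>
      rcases hwLU with h1 | h1 <;> rcases htopLU i hi with h2 | h2 <;>
      rw [h] <;> rw [h1, h2] <;> linarith
  -- sums over N split as sums over groups
  have hsum : ∀ f : ι → ℝ, ∑ i ∈ N, f i = ∑ g ∈ G, ∑ i ∈ grp g, f i := by
    intro f
    rw [hcover]
    exact Finset.sum_biUnion (fun a ha b hb hab =>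
      hdisj a (Finset.mem_coe.1 ha) b (Finset.mem_coe.1 hb) hab)
  -- per-group bounds for groups represented by w
  have grpW : ∀ g ∈ G, r g = w →
      (∑ i ∈ grp g, |loc i - top i| ≤ 3 * ∑ i ∈ grp g, |loc i - w|) ∧
      ((grp g).card : ℝ) * (U - L) ≤ 4 * ∑ i ∈ grp g, |loc i - w| := by
    intro g hg hrg
    have hb := hμ g hg
    have hre : ∀ f : ι → ℝ, ∑ i ∈ grp g, f (μ g i) = ∑ i ∈ grp g, f i := by
      intro f
      exact Finset.sum_nbij (μ g) (fun a ha => hb.mapsTo (Finset.mem_coe.2 ha))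
        hb.injOn hb.surjOn (fun a _ => rfl)
    -- per-agent inequality (*)
    have star : ∀ i ∈ grp g,
        |loc (μ g i) - top (μ g i)| ≤ 2 * |loc i - w| + |loc (μ g i) - w| := by
      intro i hi
      have hd := hdom g hg i hi
      rw [hrg] at hd
      have t1 : |loc (μ g i) - top (μ g i)| ≤ |loc (μ g i) - loc i| + |loc i - top (μ g i)| :=
        abs_sub_le _ _ _
      have t2 : |loc (μ g i) - loc i| ≤ |loc (μ g i) - w| + |w - loc i| := abs_sub_le _ _ _
      rw [abs_sub_comm w (loc i)] at t2
      linarith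
    have starstar : ∀ i ∈ grp g,
        U - L ≤ 2 * |loc i - w| + 2 * |loc (μ g i) - w| := by
      intro i hi
      have hmu : μ g i ∈ N := hmemN g hg _ (Finset.mem_coe.1 (hb.mapsTo (Finset.mem_coe.2 hi)))
      have := hdiam _ hmu
      have := star i hi
      linarith
    have e1 : ∑ i ∈ grp g, |loc (μ g i) - top (μ g i)| = ∑ i ∈ grp g, |loc i - top i| :=
      hre (fun j => |loc j - top j|)
    have e2 : ∑ i ∈ grp g, |loc (μ g i) - w| = ∑ i ∈ grp g, |loc i - w| :=
      hre (fun j => |loc j - w|)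
    constructor
    · have s1 : ∑ i ∈ grp g, |loc (μ g i) - top (μ g i)| ≤
          ∑ i ∈ grp g, (2 * |loc i - w| + |loc (μ g i) - w|) :=
        Finset.sum_le_sum star
      rw [Finset.sum_add_distrib, ← Finset.mul_sum, e1, e2] at s1
      linarith
    · have s2 : ∑ _i ∈ grp g, (U - L) ≤
          ∑ i ∈ grp g, (2 * |loc i - w| + 2 * |loc (μ g i) - w|) :=
        Finset.sum_le_sum starstar
      rw [Finset.sum_add_distrib, ← Finset.mul_sum, ← Finset.mul_sum, e2,
        Finset.sum_const, nsmul_eq_mul] at s2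
      linarith
  -- per-group bound for the other groups
  have grpV : ∀ g ∈ G,
      ∑ i ∈ grp g, |loc i - top i| ≤
        (∑ i ∈ grp g, |loc i - w|) + ((grp g).card : ℝ) * (U - L) := by
    intro g hg
    have : ∀ i ∈ grp g, |loc i - top i| ≤ |loc i - w| + (U - L) := by
      intro i hi
      have hiN := hmemN g hg i hi
      have t1 : |loc i - top i| ≤ |loc i - w| + |w - top i| := abs_sub_le _ _ _
      have := hwt i hiN
      linarith
    have s := Finset.sum_le_sum this
    rw [Finset.sum_add_distrib, Finset.sum_const, nsmul_eq_mul] at s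
    exact s
  -- cardinality comparison
  have hcard : ∑ g ∈ G.filter (fun g => ¬ r g = w), (grp g).card ≤
      ∑ g ∈ G.filter (fun g => r g = w), (grp g).card := by
    rcases Finset.eq_empty_or_nonempty (G.filter (fun g => ¬ r g = w)) with he | ⟨g0, hg0⟩
    · rw [he]; simp
    · obtain ⟨hg0G, hg0ne⟩ := Finset.mem_filter.1 hg0
      have hsame : ∀ g ∈ G, ¬ r g = w → r g = r g0 := by
        intro g hg hne
        rcases hwLU with hwl | hwu
        · have h1 : r g = U := (hrLU g hg).resolve_left (by rw [hwl] at hne; exact hne)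
          have h2 : r g0 = U := (hrLU g0 hg0G).resolve_left (by rw [hwl] at hg0ne; exact hg0ne)
          rw [h1, h2]
        · have h1 : r g = L := (hrLU g hg).resolve_right (by rw [hwu] at hne; exact hne)
          have h2 : r g0 = L := (hrLU g0 hg0G).resolve_right (by rw [hwu] at hg0ne; exact hg0ne)
          rw [h1, h2]
      have hset : G.filter (fun g => ¬ r g = w) = G.filter (fun g => r g = r g0) := by
        ext g
        simp only [Finset.mem_filter]
        constructor
        · rintro ⟨hg, hne⟩; exact ⟨hg, hsame g hg hne⟩
        · rintro ⟨hg, heq⟩; exact ⟨hg, fun hc => hg0ne (heq ▸ hc)⟩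
      rw [hset]
      exact hwmax (r g0) ⟨g0, hg0G, rfl⟩
  -- assemble
  have split := fun f : ι → ℝ =>
    Finset.sum_filter_add_sum_filter_not G (fun g => r g = w) (fun g => ∑ i ∈ grp g, f i)
  set Tw := ∑ g ∈ G.filter (fun g => r g = w), ∑ i ∈ grp g, |loc i - top i| with hTw
  set Tv := ∑ g ∈ G.filter (fun g => ¬ r g = w), ∑ i ∈ grp g, |loc i - top i| with hTv
  set Aw := ∑ g ∈ G.filter (fun g => r g = w), ∑ i ∈ grp g, |loc i - w| with hAw
  set Av := ∑ g ∈ G.filter (fun g => ¬ r g = w), ∑ i ∈ grp g, |loc i - w| with hAv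
  have hNtop : ∑ i ∈ N, |loc i - top i| = Tw + Tv := by
    rw [hsum (fun i => |loc i - top i|), ← split (fun i => |loc i - top i|)]
  have hNw : ∑ i ∈ N, |loc i - w| = Aw + Av := by
    rw [hsum (fun i => |loc i - w|), ← split (fun i => |loc i - w|)]
  have F1 : ∑ i ∈ N, |loc i - o| ≤ ∑ i ∈ N, |loc i - top i| :=
    Finset.sum_le_sum step1
  have F3 : Tw ≤ 3 * Aw := by
    rw [hTw, hAw, Finset.mul_sum]
    refine Finset.sum_le_sum ?_
    intro g hg
    obtain ⟨hgG, hrg⟩ := Finset.mem_filter.1 hg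
    exact (grpW g hgG hrg).1
  have F4 : ((∑ g ∈ G.filter (fun g => r g = w), (grp g).card : ℕ) : ℝ) * (U - L) ≤
      4 * Aw := by
    rw [hAw, Finset.mul_sum]
    push_cast
    rw [Finset.sum_mul]
    refine Finset.sum_le_sum ?_
    intro g hg
    obtain ⟨hgG, hrg⟩ := Finset.mem_filter.1 hg
    exact (grpW g hgG hrg).2
  have F5 : Tv ≤ Av + ((∑ g ∈ G.filter (fun g => ¬ r g = w), (grp g).card : ℕ) : ℝ) * (U - L) := by
    rw [hTv, hAv]
    push_cast
    rw [Finset.sum_mul, ← Finset.sum_add_distrib]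
    refine Finset.sum_le_sum ?_
    intro g hg
    exact grpV g (Finset.mem_filter.1 hg).1
  have F6 : ((∑ g ∈ G.filter (fun g => ¬ r g = w), (grp g).card : ℕ) : ℝ) * (U - L) ≤
      ((∑ g ∈ G.filter (fun g => r g = w), (grp g).card : ℕ) : ℝ) * (U - L) := by
    have := hcard
    have h1 : ((∑ g ∈ G.filter (fun g => ¬ r g = w), (grp g).card : ℕ) : ℝ) ≤
        ((∑ g ∈ G.filter (fun g => r g = w), (grp g).card : ℕ) : ℝ) := by exact_mod_cast this
    nlinarith
  have F7 : 0 ≤ Av := by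
    rw [hAv]
    refine Finset.sum_nonneg (fun g _ => Finset.sum_nonneg (fun i _ => abs_nonneg _))
  rw [hNw]
  calc ∑ i ∈ N, |loc i - o| ≤ ∑ i ∈ N, |loc i - top i| := F1
    _ = Tw + Tv := hNtop
    _ ≤ 7 * (Aw + Av) := by linarith
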